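/- arXiv:1010.1654 — 2 statements merged into one kernel-verified Lean document; each statement's English description precedes it below -/
import Mathlib

section
/- The short exact sequence 0 → 1 → Ind_{B_S}^{G_S}(1) → Sp_S → 0 of smooth \overline{\mathbb{F}}_p-representations of G_S = SL_2(F) is non-split, where 1 is the trivial representation realized as the constant functions in the smooth induction of the trivial character of the Borel B_S, and Sp_S is the quotient. -/
/-- An algebraic closure of `𝔽_p`. -/
noncomputable abbrev Fbar (p : ℕ) [Fact p.Prime] := AlgebraicClosure (ZMod p)

/-- The subspace topology on `SL₂(ℚ_p)` induced from the `p`-adic topology on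
`2 × 2` matrices. -/
noncomputable instance SL2QpTop (p : ℕ) [Fact p.Prime] :
    TopologicalSpace (Matrix.SpecialLinearGroup (Fin 2) ℚ_[p]) :=
  TopologicalSpace.induced (fun g => (g : Matrix (Fin 2) (Fin 2) ℚ_[p])) inferInstance

/-- The space `S(P¹(ℚ_p))` of locally constant `\overline{𝔽}_p`-valued functions on
the projective line, realized as locally constant functions on `SL₂(ℚ_p)` that are
invariant under left translation by the Borel subgroup `B_S`. -/
noncomputable def SP1 (p : ℕ) [Fact p.Prime] :
    Submodule (Fbar p) (Matrix.SpecialLinearGroup (Fin 2) ℚ_[p] → Fbar p) where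
  carrier := {f | IsLocallyConstant f ∧
    ∀ b g : Matrix.SpecialLinearGroup (Fin 2) ℚ_[p],
      (b : Matrix (Fin 2) (Fin 2) ℚ_[p]) 1 0 = 0 → f (b * g) = f g}
  zero_mem' := ⟨IsLocallyConstant.const 0, fun _ _ _ => rfl⟩
  add_mem' := by
    rintro f g ⟨hf1, hf2⟩ ⟨hg1, hg2⟩
    exact ⟨hf1.add hg1, fun b x hb => by simp [hf2 b x hb, hg2 b x hb]⟩
  smul_mem' := by
    rintro c f ⟨hf1, hf2⟩
    exact ⟨hf1.comp (fun y => c • y), fun b x hb => by simp [hf2 b x hb]⟩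

/-- The constant function `1`, i.e. the trivial subrepresentation of
`Ind_{B_S}^{G_S}(1) ≃ S(P¹(ℚ_p))`. -/
noncomputable def oneFun (p : ℕ) [Fact p.Prime] : SP1 p :=
  ⟨fun _ => 1, IsLocallyConstant.const 1, fun _ _ _ => rfl⟩

/-!
An invariant functional `ℓ` kills the indicator of every disc `p^n ℤ_p ⊂ P¹(ℚ_p)`: this disc is the
disjoint union of the `p` translates of `p^(n+1) ℤ_p` by the lower unipotent elements with entries
`-j p^n`, `j < p`, so `ℓ(1_{p^n ℤ_p}) = p • ℓ(1_{p^(n+1) ℤ_p}) = 0` in characteristic `p`.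
Since `P¹(ℚ_p)` is the disjoint union of `ℤ_p` and the Weyl translate of `p ℤ_p`, `ℓ(1) = 0`.
-/

open scoped MatrixGroups
open Finset

namespace Padic

variable {p : ℕ} [Fact p.Prime]

theorem norm_le_norm_p_mul_iff {x y : ℚ_[p]} (hy : y ≠ 0) :
    ‖x‖ ≤ ‖(p : ℚ_[p]) * y‖ ↔ ‖x‖ < ‖y‖ := by
  have hy' : 0 < ‖y‖ := norm_pos_iff.mpr hy
  have key := norm_le_pow_iff_norm_lt_pow_add_one (x / y) (-1)
  rw [zpow_neg_one, neg_add_cancel, zpow_zero, norm_div, div_le_iff₀ hy', div_lt_one hy'] at key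
  rwa [norm_mul, norm_p]

theorem norm_le_iff_not_norm_le_norm_p_mul {c d : ℚ_[p]} (hcd : c ≠ 0 ∨ d ≠ 0) :
    ‖c‖ ≤ ‖d‖ ↔ ¬‖d‖ ≤ ‖(p : ℚ_[p]) * c‖ := by
  rcases eq_or_ne c 0 with rfl | hc
  · simpa using hcd
  · rw [norm_le_norm_p_mul_iff hc, not_lt]

theorem card_filter_range_norm_sub_lt_one (z : ℚ_[p]) :
    #{j ∈ range p | ‖z - ((j : ℕ) : ℚ_[p])‖ < 1} = if ‖z‖ ≤ 1 then 1 else 0 := by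
  split_ifs with hz
  · let t : ℤ_[p] := ⟨z, hz⟩
    refine card_eq_one.mpr ⟨t.zmodRepr, ?_⟩
    ext j
    have hj : ‖z - j‖ < 1 ↔ t - j ∈ IsLocalRing.maximalIdeal ℤ_[p] := by
      rw [IsLocalRing.mem_maximalIdeal, PadicInt.mem_nonunits]
      rfl
    simp only [mem_filter, mem_range, mem_singleton, hj]
    exact ⟨fun h => (t.zmodRepr_unique j h.1 h.2).symm,
      fun h => h ▸ ⟨t.zmodRepr_lt_p, t.sub_zmodRepr_mem⟩⟩
  · refine card_eq_zero.mpr (filter_eq_empty_iff.mpr fun j _ hj => hz ?_)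
    calc ‖z‖ = ‖(z - j) + j‖ := by rw [sub_add_cancel]
      _ ≤ max ‖z - j‖ ‖((j : ℕ) : ℚ_[p])‖ := nonarchimedean _ _
      _ ≤ 1 := max_le hj.le (IsUltrametricDist.norm_natCast_le_one ℚ_[p] j)

theorem card_filter_range_norm_sub_mul_le {c d : ℚ_[p]} (hcd : c ≠ 0 ∨ d ≠ 0) (n : ℕ) :
    #{j ∈ range p |
        ‖c - d * (((j : ℕ) : ℚ_[p]) * (p : ℚ_[p]) ^ n)‖ ≤ ‖(p : ℚ_[p]) ^ (n + 1) * d‖} =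
      if ‖c‖ ≤ ‖(p : ℚ_[p]) ^ n * d‖ then 1 else 0 := by
  rcases eq_or_ne d 0 with rfl | hd
  · simp [hcd.resolve_right (not_not.mpr rfl)]
  set y := (p : ℚ_[p]) ^ n * d
  have hy : y ≠ 0 :=
    mul_ne_zero (pow_ne_zero _ (Nat.cast_ne_zero.mpr (Fact.out : p.Prime).ne_zero)) hd
  have hy' : 0 < ‖y‖ := norm_pos_iff.mpr hy
  have hcy : ∀ j : ℕ, c - d * (j * (p : ℚ_[p]) ^ n) = (c / y - j) * y := fun j => by
    field_simp [y]; ring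
  have hc : ‖c‖ ≤ ‖y‖ ↔ ‖c / y‖ ≤ 1 := by rw [norm_div, div_le_one hy']
  rw [show (p : ℚ_[p]) ^ (n + 1) * d = p * y by ring, if_congr hc rfl rfl,
    ← card_filter_range_norm_sub_lt_one (c / y)]
  refine congrArg card (filter_congr fun j _ => ?_)
  rw [hcy, norm_le_norm_p_mul_iff hy, norm_mul, mul_lt_iff_lt_one_left hy']

end Padic

namespace Matrix.SpecialLinearGroup

variable {R : Type*} [CommRing R]

def lowerUnipotent (a : R) : SL(2, R) :=
  ⟨!![1, 0; a, 1], by simp [det_fin_two_of]⟩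

def weylElement : SL(2, R) :=
  ⟨!![0, -1; 1, 0], by simp [det_fin_two_of]⟩

@[simp]
theorem mul_lowerUnipotent_apply_one_zero (g : SL(2, R)) (a : R) :
    (g * lowerUnipotent a) 1 0 = g 1 0 + g 1 1 * a := by
  rw [coe_mul]
  simp [lowerUnipotent, mul_apply, Fin.sum_univ_two]

@[simp]
theorem mul_lowerUnipotent_apply_one_one (g : SL(2, R)) (a : R) :
    (g * lowerUnipotent a) 1 1 = g 1 1 := by
  rw [coe_mul]
  simp [lowerUnipotent, mul_apply, Fin.sum_univ_two]

@[simp]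
theorem mul_weylElement_apply_one_zero (g : SL(2, R)) :
    (g * (weylElement : SL(2, R))) 1 0 = g 1 1 := by
  rw [coe_mul]
  simp [weylElement, mul_apply, Fin.sum_univ_two]

@[simp]
theorem mul_weylElement_apply_one_one (g : SL(2, R)) :
    (g * (weylElement : SL(2, R))) 1 1 = -g 1 0 := by
  rw [coe_mul]
  simp [weylElement, mul_apply, Fin.sum_univ_two]

theorem mul_apply_one_of_apply_one_zero_eq_zero {b : SL(2, R)} (hb : b 1 0 = 0) (g : SL(2, R))
    (j : Fin 2) : (b * g) 1 j = b 1 1 * g 1 j := by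
  simp [coe_mul, mul_apply, Fin.sum_univ_two, hb]

theorem apply_one_one_ne_zero_of_apply_one_zero_eq_zero [Nontrivial R] {b : SL(2, R)}
    (hb : b 1 0 = 0) : b 1 1 ≠ 0 := by
  intro h
  have hdet := b.det_coe
  rw [det_fin_two, hb, h] at hdet
  simp at hdet

theorem apply_one_zero_ne_zero_or_apply_one_one_ne_zero [Nontrivial R] (g : SL(2, R)) :
    g 1 0 ≠ 0 ∨ g 1 1 ≠ 0 := by
  by_contra! h
  have hdet := g.det_coe
  rw [det_fin_two, h.1, h.2] at hdet
  simp at hdet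

end Matrix.SpecialLinearGroup

namespace SL2QpTop

variable {p : ℕ} [Fact p.Prime]

theorem continuous_apply (i j : Fin 2) : Continuous fun g : SL(2, ℚ_[p]) => g i j :=
  continuous_induced_dom.matrix_elem i j

theorem continuous_mul_const (g : SL(2, ℚ_[p])) : Continuous fun x : SL(2, ℚ_[p]) => x * g :=
  continuous_induced_rng.2 <| by
    simpa only [Function.comp_def, Matrix.SpecialLinearGroup.coe_mul] using
      continuous_induced_dom.matrix_mul
        (continuous_const (y := (g : Matrix (Fin 2) (Fin 2) ℚ_[p])))

end SL2QpTop

namespace SP1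

open Matrix.SpecialLinearGroup SL2QpTop

variable {p : ℕ} [Fact p.Prime]

noncomputable def translate (f : SP1 p) (g : SL(2, ℚ_[p])) : SP1 p :=
  ⟨fun x => (f : SL(2, ℚ_[p]) → Fbar p) (x * g), f.2.1.comp_continuous (continuous_mul_const g),
    fun b x hb => by simpa only [mul_assoc] using f.2.2 b (x * g) hb⟩

/-- The preimage in `SL₂(ℚ_p)` of the disc `p^n ℤ_p ⊂ P¹(ℚ_p)`, the coset `B_S g` being the point
`[g 1 0 : g 1 1]`. -/
def disc (p : ℕ) [Fact p.Prime] (n : ℕ) : Set SL(2, ℚ_[p]) :=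
  {g | ‖g 1 0‖ ≤ ‖(p : ℚ_[p]) ^ n * g 1 1‖}

theorem isClopen_disc (n : ℕ) : IsClopen (disc p n) := by
  refine ⟨isClosed_le (continuous_apply 1 0).norm
    (continuous_const.mul (continuous_apply 1 1)).norm, ?_⟩
  -- the norm of `ℚ_p` is discrete, so the closed condition is also an open one
  have hdisc : disc p n = {g | ‖g 1 0‖ < ‖(p : ℚ_[p])⁻¹ * ((p : ℚ_[p]) ^ n * g 1 1)‖} := by
    ext g
    rcases eq_or_ne (g 1 1) 0 with hg | hg
    · have hc := (apply_one_zero_ne_zero_or_apply_one_one_ne_zero g).resolve_right (not_not.mpr hg)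
      simp [disc, hg, hc]
    · have hp : (p : ℚ_[p]) ≠ 0 := Nat.cast_ne_zero.mpr (Fact.out : p.Prime).ne_zero
      have hy : (p : ℚ_[p])⁻¹ * ((p : ℚ_[p]) ^ n * g 1 1) ≠ 0 :=
        mul_ne_zero (inv_ne_zero hp) (mul_ne_zero (pow_ne_zero n hp) hg)
      rw [disc, Set.mem_ofPred_eq, Set.mem_ofPred_eq, ← Padic.norm_le_norm_p_mul_iff hy,
        mul_inv_cancel_left₀ hp]
  rw [hdisc]
  exact isOpen_lt (continuous_apply 1 0).norm
    (continuous_const.mul (continuous_const.mul (continuous_apply 1 1))).norm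

theorem mul_mem_disc_iff {b : SL(2, ℚ_[p])} (hb : b 1 0 = 0) (g : SL(2, ℚ_[p])) (n : ℕ) :
    b * g ∈ disc p n ↔ g ∈ disc p n := by
  simp only [disc, Set.mem_ofPred_eq, mul_apply_one_of_apply_one_zero_eq_zero hb, norm_mul,
    mul_left_comm ‖(p : ℚ_[p]) ^ n‖]
  exact mul_le_mul_iff_right₀
    (norm_pos_iff.mpr (apply_one_one_ne_zero_of_apply_one_zero_eq_zero hb))

theorem mul_weylElement_mem_disc_one_iff (g : SL(2, ℚ_[p])) :
    g * weylElement ∈ disc p 1 ↔ g ∉ disc p 0 := by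
  simp only [disc, Set.mem_ofPred_eq, mul_weylElement_apply_one_zero,
    mul_weylElement_apply_one_one, pow_one, pow_zero, one_mul, mul_neg, norm_neg]
  exact iff_not_comm.mp
    (Padic.norm_le_iff_not_norm_le_norm_p_mul (apply_one_zero_ne_zero_or_apply_one_one_ne_zero g))

noncomputable def discIndicator (p : ℕ) [Fact p.Prime] (n : ℕ) : SP1 p :=
  ⟨(disc p n).indicator 1,
    LocallyConstant.coe_charFn (Fbar p) (isClopen_disc (p := p) n) ▸
      LocallyConstant.isLocallyConstant _,
    fun b g hb => by
      show (disc p n).indicator 1 (b * g) = (disc p n).indicator 1 g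
      classical
      simp only [Set.indicator_apply, Pi.one_apply, mul_mem_disc_iff hb]⟩

theorem oneFun_eq_discIndicator_add_translate :
    oneFun p = discIndicator p 0 + translate (discIndicator p 1) weylElement := by
  refine Subtype.ext (funext fun x => ?_)
  show (1 : Fbar p) = (disc p 0).indicator 1 x + (disc p 1).indicator 1 (x * weylElement)
  by_cases hx : x ∈ disc p 0 <;> simp [hx, mul_weylElement_mem_disc_one_iff]

theorem discIndicator_eq_sum_translate (n : ℕ) :
    discIndicator p n = ∑ j ∈ range p,
      translate (discIndicator p (n + 1)) (lowerUnipotent (-((j : ℚ_[p]) * (p : ℚ_[p]) ^ n))) := by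
  refine Subtype.ext (funext fun x => ?_)
  rw [Submodule.coe_sum, Finset.sum_apply]
  show (disc p n).indicator 1 x = ∑ j ∈ range p,
    (disc p (n + 1)).indicator 1 (x * lowerUnipotent (-((j : ℚ_[p]) * (p : ℚ_[p]) ^ n)))
  simp only [Set.indicator_apply, Pi.one_apply, sum_boole, disc, Set.mem_ofPred_eq,
    mul_lowerUnipotent_apply_one_zero, mul_lowerUnipotent_apply_one_one, mul_neg, ← sub_eq_add_neg]
  rw [Padic.card_filter_range_norm_sub_mul_le (apply_one_zero_ne_zero_or_apply_one_one_ne_zero x) n]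
  split_ifs <;> simp

end SP1

/-- The short exact sequence `0 → 1 → Ind_{B_S}^{G_S}(1) → Sp_S → 0` of smooth
representations of `SL₂(ℚ_p)` is non-split: there is no `SL₂(ℚ_p)`-equivariant
linear retraction onto the constant functions, i.e. no invariant linear functional
taking the value `1` on the constant function `1`. -/
theorem stmt_9 (p : ℕ) [Fact p.Prime] (ℓ : SP1 p →ₗ[Fbar p] Fbar p)
    (hinv : ∀ (f f' : SP1 p) (g : Matrix.SpecialLinearGroup (Fin 2) ℚ_[p]),
      (∀ x, (f' : _ → Fbar p) x = (f : _ → Fbar p) (x * g)) → ℓ f' = ℓ f) :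
    ℓ (oneFun p) ≠ 1 := by
  have hℓ : ∀ f g, ℓ (SP1.translate f g) = ℓ f := fun f g => hinv f _ g fun _ => rfl
  have hdisc : ∀ n, ℓ (SP1.discIndicator p n) = 0 := fun n => by
    rw [SP1.discIndicator_eq_sum_translate n, map_sum]
    simp only [hℓ, sum_const, card_range, nsmul_eq_mul, CharP.cast_eq_zero, zero_mul]
  rw [SP1.oneFun_eq_discIndicator_add_translate, map_add, hℓ, hdisc, hdisc, add_zero]
  exact zero_ne_one
end

section
/- Key summation identity (unramified case, level 2): with notation as before (φ₀(x) = 1 for v(x) ≥ 0, φ₀(x) = Λ^{v(x)} for v(x) ≤ 0, Λ ∈ \overline{\mathbb{F}}_p^×, residue field of size q = 0 in \overline{\mathbb{F}}_p), for every y ∈ F: Σ_{x ∈ R₂} φ₀(y + x/ϖ²) = (1 − Λ^{-1}) · 1_{ϖ^{-2}O_F}(y), where R₂ ⊂ O_F is a set of representatives of O_F/ϖ²O_F. -/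
/-!
Writing `y = z / ϖ²` with `z ∈ O_F` when `|y| ≤ q²`, the summand `φ₀((z + x) / ϖ²)` is `1`, `Λ⁻¹`
or `Λ⁻²` according as `ϖ² ∣ z + x`, `ϖ ∣ z + x` or neither, and `z + x` runs over a residue system
modulo `ϖ²` as `x` runs over `R₂`. Counting residues gives `1 + (q - 1) Λ⁻¹ + (q² - q) Λ⁻²`,
which is `1 - Λ⁻¹` in characteristic `p`. When `|y| > q²`, every summand equals `φ₀(y)` by the
ultrametric inequality, and there are `q² = 0` of them.
-/

open Finset PadicInt

namespace Nat

lemma card_filter_range_mul_dvd (m : ℕ) {d : ℕ} (hd : 0 < d) :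
    #{n ∈ range (m * d) | d ∣ n} = m := by
  have : {n ∈ range (m * d) | d ∣ n} = (range m).map ⟨(· * d), mul_left_injective₀ hd.ne'⟩ := by
    ext n
    simp only [mem_filter, mem_range, mem_map, Function.Embedding.coeFn_mk,
      dvd_iff_exists_eq_mul_left]
    constructor
    · rintro ⟨hn, k, rfl⟩
      exact ⟨k, lt_of_mul_lt_mul_right hn (Nat.zero_le d), rfl⟩
    · rintro ⟨k, hk, rfl⟩
      exact ⟨Nat.mul_lt_mul_of_pos_right hk hd, k, rfl⟩
  rw [this, card_map, card_range]

end Nat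

variable {p : ℕ} [Fact p.Prime]

lemma sum_range_sq_ite_dvd {K : Type*} [CommRing K] [CharP K p] (a b c : K) :
    ∑ n ∈ range (p ^ 2), (if p ^ 2 ∣ n then a else if p ∣ n then b else c) = a - b := by
  have hp : 0 < p := (Fact.out : p.Prime).pos
  have hsplit : ∀ n : ℕ, (if p ^ 2 ∣ n then a else if p ∣ n then b else c) =
      c + (if p ∣ n then b - c else 0) + (if p ^ 2 ∣ n then a - b else 0) := by
    intro n
    by_cases h2 : p ^ 2 ∣ n
    · simp [h2, (dvd_pow_self p two_ne_zero).trans h2]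
    · by_cases h1 : p ∣ n <;> simp [h1, h2]
  have hcard₁ := Nat.card_filter_range_mul_dvd p hp
  have hcard₂ := Nat.card_filter_range_mul_dvd 1 (pow_pos hp 2)
  rw [← sq] at hcard₁
  rw [one_mul] at hcard₂
  simp only [hsplit, sum_add_distrib, ← sum_filter, sum_const, hcard₁, hcard₂, card_range,
    nsmul_eq_mul, Nat.cast_pow, CharP.cast_eq_zero, Nat.cast_one]
  ring

namespace Padic

lemma valuation_div_p_pow {x : ℚ_[p]} (hx : x ≠ 0) (k : ℕ) :
    (x / (p : ℚ_[p]) ^ k).valuation = x.valuation - k := by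
  have hp : (p : ℚ_[p]) ≠ 0 := Nat.cast_ne_zero.2 (Fact.out : p.Prime).ne_zero
  rw [div_eq_mul_inv, valuation_mul hx (inv_ne_zero (pow_ne_zero k hp)), valuation_inv,
    valuation_pow, valuation_p]
  ring

lemma valuation_eq_of_norm_eq {x y : ℚ_[p]} (h : ‖x‖ = ‖y‖) : x.valuation = y.valuation := by
  rcases eq_or_ne x 0 with rfl | hx
  · rw [norm_zero, eq_comm, norm_eq_zero] at h
    rw [h]
  have hy : y ≠ 0 := norm_ne_zero_iff.1 (h ▸ norm_ne_zero_iff.2 hx)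
  have hp : (1 : ℝ) < p := mod_cast (Fact.out : p.Prime).one_lt
  rw [norm_eq_zpow_neg_valuation hx, norm_eq_zpow_neg_valuation hy] at h
  exact neg_injective (zpow_right_injective₀ (by positivity) hp.ne' h)

lemma exists_eq_coe_div_p_pow_of_norm_le {y : ℚ_[p]} {k : ℕ} (hy : ‖y‖ ≤ (p : ℝ) ^ k) :
    ∃ z : ℤ_[p], y = (z : ℚ_[p]) / (p : ℚ_[p]) ^ k := by
  have hp : (p : ℚ_[p]) ^ k ≠ 0 := pow_ne_zero k (Nat.cast_ne_zero.2 (Fact.out : p.Prime).ne_zero)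
  have hz : ‖y * (p : ℚ_[p]) ^ k‖ ≤ 1 := by
    rw [norm_mul, norm_p_pow, zpow_neg, zpow_natCast, ← div_eq_mul_inv]
    exact div_le_one_of_le₀ hy (by positivity)
  exact ⟨⟨_, hz⟩, (mul_div_cancel_right₀ y hp).symm⟩

end Padic

namespace PadicInt

lemma pow_dvd_iff_toZModPow_eq_zero (k : ℕ) (w : ℤ_[p]) :
    (p : ℤ_[p]) ^ k ∣ w ↔ toZModPow k w = 0 := by
  rw [← RingHom.mem_ker, ker_toZModPow, Ideal.mem_span_singleton]

lemma pow_dvd_iff_dvd_val_toZModPow {j k : ℕ} (hjk : j ≤ k) (w : ℤ_[p]) :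
    (p : ℤ_[p]) ^ j ∣ w ↔ p ^ j ∣ (toZModPow k w).val := by
  have hw : (p : ℤ_[p]) ^ j ∣ (toZModPow k w).val - w := by
    refine (pow_dvd_pow _ hjk).trans ((pow_dvd_iff_toZModPow_eq_zero k _).2 ?_)
    rw [map_sub, map_natCast, ZMod.natCast_zmod_val, sub_self]
  rw [← dvd_add_right hw, sub_add_cancel]
  exact_mod_cast pow_p_dvd_int_iff j ((toZModPow k w).val : ℤ)

end PadicInt

def IsResidueSystem (k : ℕ) (R : Finset ℤ_[p]) : Prop :=
  ∀ a : ℤ_[p], ∃! x : ℤ_[p], x ∈ R ∧ (p : ℤ_[p]) ^ k ∣ a - x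

namespace IsResidueSystem

variable {k : ℕ} {R : Finset ℤ_[p]}

lemma sum_val_toZModPow_add {M : Type*} [AddCommMonoid M] (hR : IsResidueSystem k R)
    (z : ℤ_[p]) (f : ℕ → M) :
    ∑ x ∈ R, f (toZModPow k (z + x)).val = ∑ n ∈ range (p ^ k), f n := by
  have : NeZero (p ^ k) := ⟨pow_ne_zero k (Fact.out : p.Prime).ne_zero⟩
  refine sum_bij (fun x _ => (toZModPow k (z + x)).val) (fun _ _ => mem_range.2 (ZMod.val_lt _))
    (fun a ha b hb hab => ?_) (fun n hn => ?_) (fun _ _ => rfl)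
  · have hab' : toZModPow k (z + a) = toZModPow k (z + b) := ZMod.val_injective _ hab
    have hdvd : (p : ℤ_[p]) ^ k ∣ a - b := by
      rw [pow_dvd_iff_toZModPow_eq_zero, ← add_sub_add_left_eq_sub a b z, map_sub, hab', sub_self]
    exact (hR a).unique ⟨ha, by simp⟩ ⟨hb, hdvd⟩
  · obtain ⟨x, ⟨hx, hdvd⟩, -⟩ := hR ((n : ℤ_[p]) - z)
    refine ⟨x, hx, ?_⟩
    rw [sub_sub, pow_dvd_iff_toZModPow_eq_zero, map_sub, map_natCast, sub_eq_zero] at hdvd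
    rw [← hdvd, ZMod.val_natCast, Nat.mod_eq_of_lt (mem_range.1 hn)]

lemma card_eq (hR : IsResidueSystem k R) : #R = p ^ k := by
  simpa using hR.sum_val_toZModPow_add 0 (fun _ => (1 : ℕ))

end IsResidueSystem

noncomputable def phiZero {K : Type*} [DivisionRing K] (Λ : K) (x : ℚ_[p]) : K :=
  if 0 ≤ x.valuation then 1 else Λ ^ x.valuation

section phiZero

variable {K : Type*} [DivisionRing K]

lemma phiZero_congr_norm (Λ : K) {x y : ℚ_[p]} (h : ‖x‖ = ‖y‖) : phiZero Λ x = phiZero Λ y := by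
  rw [phiZero, phiZero, Padic.valuation_eq_of_norm_eq h]

open scoped Classical in
lemma phiZero_coe_div_p_sq (Λ : K) (w : ℤ_[p]) :
    phiZero Λ ((w : ℚ_[p]) / (p : ℚ_[p]) ^ 2) =
      if (p : ℤ_[p]) ^ 2 ∣ w then 1 else if (p : ℤ_[p]) ∣ w then Λ⁻¹ else Λ⁻¹ ^ 2 := by
  rcases eq_or_ne w 0 with rfl | hw
  · simp [phiZero]
  have hdvd : ∀ j : ℕ, (p : ℤ_[p]) ^ j ∣ w ↔ j ≤ w.valuation := fun j => by
    rw [← Ideal.mem_span_singleton, mem_span_pow_iff_le_valuation w hw]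
  have hdvd₁ := hdvd 1
  rw [pow_one] at hdvd₁
  rw [phiZero, Padic.valuation_div_p_pow (coe_ne_zero.2 hw), valuation_coe, hdvd 2, hdvd₁]
  rcases (by omega : w.valuation = 0 ∨ w.valuation = 1 ∨ 2 ≤ w.valuation) with h | h | h
  · simp [h, zpow_neg]
  · simp [h]
  · simp [h]

end phiZero

namespace IsResidueSystem

variable {K : Type*} [Field K] [CharP K p] {R : Finset ℤ_[p]}

lemma sum_phiZero_coe_add_div_p_sq (Λ : K) (hR : IsResidueSystem 2 R) (z : ℤ_[p]) :
    ∑ x ∈ R, phiZero Λ (((z + x : ℤ_[p]) : ℚ_[p]) / (p : ℚ_[p]) ^ 2) = 1 - Λ⁻¹ := by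
  classical
  set G : ℕ → K := fun n => if p ^ 2 ∣ n then 1 else if p ∣ n then Λ⁻¹ else Λ⁻¹ ^ 2
  have hterm : ∀ w : ℤ_[p], phiZero Λ ((w : ℚ_[p]) / (p : ℚ_[p]) ^ 2) = G (toZModPow 2 w).val := by
    intro w
    have hdvd₁ := pow_dvd_iff_dvd_val_toZModPow (by norm_num : 1 ≤ 2) w
    rw [pow_one, pow_one] at hdvd₁
    simp only [G, phiZero_coe_div_p_sq, pow_dvd_iff_dvd_val_toZModPow le_rfl, hdvd₁]
  calc ∑ x ∈ R, phiZero Λ (((z + x : ℤ_[p]) : ℚ_[p]) / (p : ℚ_[p]) ^ 2)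
      = ∑ x ∈ R, G (toZModPow 2 (z + x)).val := sum_congr rfl fun x _ => hterm (z + x)
    _ = ∑ n ∈ range (p ^ 2), G n := hR.sum_val_toZModPow_add z G
    _ = 1 - Λ⁻¹ := sum_range_sq_ite_dvd _ _ _

lemma sum_phiZero_add_div_p_pow_of_lt_norm (Λ : K) {k : ℕ} (hk : k ≠ 0) (hR : IsResidueSystem k R)
    {y : ℚ_[p]} (hy : (p : ℝ) ^ k < ‖y‖) :
    ∑ x ∈ R, phiZero Λ (y + (x : ℚ_[p]) / (p : ℚ_[p]) ^ k) = 0 := by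
  have hterm : ∀ x ∈ R, phiZero Λ (y + (x : ℚ_[p]) / (p : ℚ_[p]) ^ k) = phiZero Λ y := by
    intro x _
    have hx : ‖(x : ℚ_[p]) / (p : ℚ_[p]) ^ k‖ < ‖y‖ := by
      refine lt_of_le_of_lt ?_ hy
      rw [norm_div, Padic.norm_p_pow, zpow_neg, zpow_natCast, div_inv_eq_mul]
      exact mul_le_of_le_one_left (by positivity) x.norm_le_one
    refine phiZero_congr_norm Λ ?_
    rw [Padic.add_eq_max_of_ne hx.ne', max_eq_left hx.le]
  rw [sum_congr rfl hterm, sum_const, hR.card_eq, nsmul_eq_mul, Nat.cast_pow,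
    CharP.cast_eq_zero, zero_pow hk, zero_mul]

end IsResidueSystem

/-- Key summation identity (unramified case, level 2): with
`φ₀(x) = 1` for `v(x) ≥ 0` and `φ₀(x) = Λ^{v(x)}` for `v(x) < 0`, and `R₂` a set
of representatives of `O_F/ϖ²O_F` (here `F = ℚ_p`, `ϖ = p`), one has
`Σ_{x ∈ R₂} φ₀(y + x/ϖ²) = (1 − Λ⁻¹)·1_{ϖ⁻²O_F}(y)` for every `y`. -/
theorem stmt_12 (p : ℕ) [Fact p.Prime] (Λ : (Fbar p)ˣ)
    (R₂ : Finset ℤ_[p])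
    (hrep : ∀ a : ℤ_[p], ∃! x : ℤ_[p], x ∈ R₂ ∧ (p : ℤ_[p]) ^ 2 ∣ (a - x))
    (φ : ℚ_[p] → Fbar p)
    (hφ : ∀ x : ℚ_[p], φ x =
      if 0 ≤ x.valuation then 1 else (Λ : Fbar p) ^ x.valuation)
    (y : ℚ_[p]) :
    ∑ x ∈ R₂, φ (y + (x : ℚ_[p]) / (p : ℚ_[p]) ^ 2) =
      (1 - (Λ : Fbar p)⁻¹) * (if ‖y‖ ≤ (p : ℝ) ^ 2 then 1 else 0) := by
  obtain rfl : φ = phiZero (Λ : Fbar p) := funext hφ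
  split_ifs with hy
  · obtain ⟨z, rfl⟩ := Padic.exists_eq_coe_div_p_pow_of_norm_le hy
    simp_rw [← add_div, ← PadicInt.coe_add, mul_one]
    exact IsResidueSystem.sum_phiZero_coe_add_div_p_sq _ hrep z
  · rw [mul_zero]
    exact IsResidueSystem.sum_phiZero_add_div_p_pow_of_lt_norm _ two_ne_zero hrep (not_le.1 hy)
end
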